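/- The resolvent satisfies the resolvent identity: for every λ ∈ ℝ and all (t,s) with t₀ ≤ s ≤ t ≤ T, R(t,s,λ) = λ K(t,s) + λ ∫_s^t K(t,z) R(z,s,λ) dz. -/

import Mathlib

/-!
Extend `K` continuously from the triangle to the plane (Tietze). The iterated kernels of the
extension are continuous, agree with `K_n` on the triangle, and satisfy
`|K_{n+1}(t,s)| ≤ M^{n+1} (t-s)^n / n!`. Hence the resolvent series converges uniformly on
`[s,t]`; peeling off its first term and integrating the rest term by term gives the identity.
-/

open MeasureTheory intervalIntegral Set Function
open scoped Nat

/-- `iteratedKernel k n` is `K_{n+1}`: indices are shifted so that the resolvent series starts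
at `n = 0`. -/
noncomputable def iteratedKernel (k : ℝ → ℝ → ℝ) : ℕ → ℝ → ℝ → ℝ
  | 0 => k
  | n + 1 => fun t s => ∫ z in s..t, k t z * iteratedKernel k n z s

noncomputable def resolventSeries (k : ℝ → ℝ → ℝ) (lam t s : ℝ) : ℝ :=
  ∑' n : ℕ, lam ^ (n + 1) * iteratedKernel k n t s

def triangle (t₀ T : ℝ) : Set (ℝ × ℝ) := {q | t₀ ≤ q.2 ∧ q.2 ≤ q.1 ∧ q.1 ≤ T}

theorem mem_triangle {t₀ T t s : ℝ} : (t, s) ∈ triangle t₀ T ↔ t₀ ≤ s ∧ s ≤ t ∧ t ≤ T := Iff.rfl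

theorem isClosed_triangle (t₀ T : ℝ) : IsClosed (triangle t₀ T) :=
  (isClosed_le continuous_const continuous_snd).inter
    ((isClosed_le continuous_snd continuous_fst).inter
      (isClosed_le continuous_fst continuous_const))

theorem exists_continuous_uncurry_eqOn {S : Set (ℝ × ℝ)} (hS : IsClosed S) {K : ℝ → ℝ → ℝ}
    (hK : ContinuousOn (uncurry K) S) :
    ∃ k : ℝ → ℝ → ℝ, Continuous (uncurry k) ∧ EqOn (uncurry k) (uncurry K) S := by
  obtain ⟨g, hg⟩ := ContinuousMap.exists_restrict_eq hS ⟨S.domRestrict (uncurry K), hK.domRestrict⟩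
  exact ⟨curry g, g.continuous, fun q hq => ContinuousMap.congr_fun hg ⟨q, hq⟩⟩

theorem integral_sub_pow_div_factorial (s t : ℝ) (n : ℕ) :
    ∫ z in s..t, (z - s) ^ n / n ! = (t - s) ^ (n + 1) / (n + 1)! := by
  rw [intervalIntegral.integral_div, intervalIntegral.integral_comp_sub_right (· ^ n), sub_self,
    integral_pow, zero_pow n.succ_ne_zero, sub_zero, Nat.factorial_succ]
  push_cast
  field_simp

theorem summable_pow_succ_mul_pow_div_factorial (x L : ℝ) :
    Summable fun n : ℕ => x ^ (n + 1) * (L ^ n / n !) :=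
  ((Real.summable_pow_div_factorial (x * L)).mul_left x).congr fun n => by
    rw [mul_pow, pow_succ]; ring

section IteratedKernel

variable {k : ℝ → ℝ → ℝ}

theorem exists_abs_le_on_triangle (hk : Continuous (uncurry k)) (a b : ℝ) :
    ∃ M, ∀ t s, a ≤ s → s ≤ t → t ≤ b → |k t s| ≤ M := by
  obtain ⟨M, hM⟩ := (isCompact_Icc.prod isCompact_Icc).exists_bound_of_continuousOn
    (s := Icc a b ×ˢ Icc a b) hk.continuousOn
  exact ⟨M, fun t s h₁ h₂ h₃ => hM (t, s) ⟨⟨h₁.trans h₂, h₃⟩, h₁, h₂.trans h₃⟩⟩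

theorem continuous_iteratedKernel (hk : Continuous (uncurry k)) (n : ℕ) :
    Continuous (uncurry (iteratedKernel k n)) := by
  induction n with
  | zero => exact hk
  | succ n ih =>
    let f : ℝ × ℝ → ℝ → ℝ := fun p z => k p.1 z * iteratedKernel k n z p.2
    have hf : Continuous (uncurry f) :=
      (hk.comp (continuous_fst.fst.prodMk continuous_snd)).mul
        (ih.comp (continuous_snd.prodMk continuous_fst.snd))
    -- `∫ z in s..t` is split at `0` so that only the upper limit of each piece moves
    have hsplit : uncurry (iteratedKernel k (n + 1)) =
        fun p => (∫ z in 0..p.1, f p z) - ∫ z in 0..p.2, f p z := by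
      ext p
      exact (integral_interval_sub_left ((hf.uncurry_left p).intervalIntegrable _ _)
        ((hf.uncurry_left p).intervalIntegrable _ _)).symm
    rw [hsplit]
    exact (continuous_parametric_intervalIntegral_of_continuous hf continuous_fst).sub
      (continuous_parametric_intervalIntegral_of_continuous hf continuous_snd)

theorem abs_iteratedKernel_le {a b M : ℝ} (hM : ∀ t s, a ≤ s → s ≤ t → t ≤ b → |k t s| ≤ M)
    (n : ℕ) {t s : ℝ} (has : a ≤ s) (hst : s ≤ t) (htb : t ≤ b) :
    |iteratedKernel k n t s| ≤ M ^ (n + 1) * ((t - s) ^ n / n !) := by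
  induction n generalizing t with
  | zero => simpa [iteratedKernel] using hM t s has hst htb
  | succ n ih =>
    have hbound : ∀ z ∈ Ioc s t,
        ‖k t z * iteratedKernel k n z s‖ ≤ M * (M ^ (n + 1) * ((z - s) ^ n / n !)) := by
      intro z ⟨hsz, hzt⟩
      have hkz := hM t z (has.trans hsz.le) hzt htb
      rw [Real.norm_eq_abs, abs_mul]
      exact mul_le_mul hkz (ih hsz.le (hzt.trans htb)) (abs_nonneg _) ((abs_nonneg _).trans hkz)
    calc |iteratedKernel k (n + 1) t s| = ‖∫ z in s..t, k t z * iteratedKernel k n z s‖ := rfl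
      _ ≤ ∫ z in s..t, M * (M ^ (n + 1) * ((z - s) ^ n / n !)) :=
        norm_integral_le_of_norm_le hst (ae_of_all _ hbound)
          (Continuous.intervalIntegrable (by fun_prop) _ _)
      _ = M ^ (n + 1 + 1) * ((t - s) ^ (n + 1) / (n + 1)!) := by
        rw [intervalIntegral.integral_const_mul, intervalIntegral.integral_const_mul,
          integral_sub_pow_div_factorial, pow_succ _ (n + 1)]
        ring

theorem summable_pow_mul_iteratedKernel (hk : Continuous (uncurry k)) (lam : ℝ) {s t : ℝ}
    (hst : s ≤ t) : Summable fun n : ℕ => lam ^ (n + 1) * iteratedKernel k n t s := by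
  obtain ⟨M, hM⟩ := exists_abs_le_on_triangle hk s t
  refine .of_norm_bounded (summable_pow_succ_mul_pow_div_factorial (|lam| * M) (t - s)) fun n => ?_
  rw [Real.norm_eq_abs, abs_mul, abs_pow, mul_pow, mul_assoc]
  exact mul_le_mul_of_nonneg_left (abs_iteratedKernel_le hM n le_rfl hst le_rfl) (by positivity)

theorem hasSum_pow_mul_iteratedKernel_succ (hk : Continuous (uncurry k)) (lam : ℝ) {s t : ℝ}
    (hst : s ≤ t) :
    HasSum (fun n : ℕ => lam ^ (n + 1) * iteratedKernel k (n + 1) t s)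
      (∫ z in s..t, k t z * resolventSeries k lam z s) := by
  obtain ⟨M, hM⟩ := exists_abs_le_on_triangle hk s t
  set c : ℕ → ℝ := fun n => M * ((|lam| * M) ^ (n + 1) * ((t - s) ^ n / n !))
  have hterm : ∀ n, ∀ z ∈ uIoc s t,
      ‖lam ^ (n + 1) * (k t z * iteratedKernel k n z s)‖ ≤ c n := by
    intro n z hz
    rw [uIoc_of_le hst] at hz
    have hkz := hM t z hz.1.le hz.2 le_rfl
    have hM0 : 0 ≤ M := (abs_nonneg _).trans hkz
    have hzs : 0 ≤ z - s := sub_nonneg.mpr hz.1.le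
    calc ‖lam ^ (n + 1) * (k t z * iteratedKernel k n z s)‖
        = |lam| ^ (n + 1) * (|k t z| * |iteratedKernel k n z s|) := by
          rw [Real.norm_eq_abs, abs_mul, abs_mul, abs_pow]
      _ ≤ |lam| ^ (n + 1) * (M * (M ^ (n + 1) * ((z - s) ^ n / n !))) := by
          gcongr
          exact abs_iteratedKernel_le hM n le_rfl hz.1.le hz.2
      _ ≤ |lam| ^ (n + 1) * (M * (M ^ (n + 1) * ((t - s) ^ n / n !))) := by
          gcongr
          exact hz.2
      _ = c n := by ring
  have hF : ∀ n, Continuous fun z => lam ^ (n + 1) * (k t z * iteratedKernel k n z s) := fun n =>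
    continuous_const.mul ((hk.comp (continuous_const.prodMk continuous_id)).mul
      ((continuous_iteratedKernel hk n).comp (continuous_id.prodMk continuous_const)))
  have hc : Summable c := (summable_pow_succ_mul_pow_div_factorial _ _).mul_left M
  refine (intervalIntegral.hasSum_integral_of_dominated_convergence (fun n _ => c n)
    (fun n => (hF n).aestronglyMeasurable) (fun n => ae_of_all _ (hterm n))
    (ae_of_all _ fun _ _ => hc) (by simp) (ae_of_all _ fun z hz => ?_)).congr_fun fun n => ?_
  · rw [uIoc_of_le hst] at hz
    simpa only [resolventSeries, mul_left_comm (k t z)] using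
      ((summable_pow_mul_iteratedKernel hk lam hz.1.le).hasSum.mul_left (k t z))
  · exact (intervalIntegral.integral_const_mul _ _).symm

theorem resolventSeries_eq (hk : Continuous (uncurry k)) (lam : ℝ) {s t : ℝ} (hst : s ≤ t) :
    resolventSeries k lam t s =
      lam * k t s + lam * ∫ z in s..t, k t z * resolventSeries k lam z s := by
  have hshift : HasSum (fun n : ℕ => lam ^ (n + 1 + 1) * iteratedKernel k (n + 1) t s)
      (lam * ∫ z in s..t, k t z * resolventSeries k lam z s) :=
    ((hasSum_pow_mul_iteratedKernel_succ hk lam hst).mul_left lam).congr_fun fun n => by ring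
  rw [resolventSeries, ((hasSum_nat_add_iff (f := fun n => lam ^ (n + 1) * iteratedKernel k n t s)
    1).mp hshift).tsum_eq]
  simp only [Finset.range_one, Finset.sum_singleton, zero_add, pow_one, iteratedKernel]
  ring

theorem iteratedKernel_eq {t₀ T : ℝ} {K : ℝ → ℝ → ℝ} {Kn : ℕ → ℝ → ℝ → ℝ}
    (hkK : EqOn (uncurry k) (uncurry K) (triangle t₀ T)) (hKn1 : ∀ t s, Kn 1 t s = K t s)
    (hKnrec : ∀ n, 2 ≤ n → ∀ t s, Kn n t s = ∫ z in s..t, K t z * Kn (n - 1) z s) (n : ℕ) :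
    EqOn (uncurry (iteratedKernel k n)) (uncurry (Kn (n + 1))) (triangle t₀ T) := by
  induction n with
  | zero => exact fun q hq => (hkK hq).trans (hKn1 q.1 q.2).symm
  | succ n ih =>
    rintro ⟨t, s⟩ ⟨h₁, h₂, h₃⟩
    change ∫ z in s..t, k t z * iteratedKernel k n z s = Kn (n + 2) t s
    rw [hKnrec (n + 2) (by omega)]
    refine integral_congr fun z hz => ?_
    rw [uIcc_of_le h₂] at hz
    exact congrArg₂ (· * ·) (hkK (mem_triangle.2 ⟨h₁.trans hz.1, hz.2, h₃⟩))
      (ih (mem_triangle.2 ⟨h₁, hz.1, hz.2.trans h₃⟩))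

end IteratedKernel

theorem resolvent_identity_general
    (t₀ T : ℝ)
    (K : ℝ → ℝ → ℝ)
    (hK : ContinuousOn (fun q : ℝ × ℝ => K q.1 q.2)
      {q : ℝ × ℝ | t₀ ≤ q.2 ∧ q.2 ≤ q.1 ∧ q.1 ≤ T})
    (Kn : ℕ → ℝ → ℝ → ℝ)
    (hKn1 : ∀ t s, Kn 1 t s = K t s)
    (hKnrec : ∀ n, 2 ≤ n → ∀ t s, Kn n t s = ∫ z in s..t, K t z * Kn (n - 1) z s)
    (R : ℝ → ℝ → ℝ → ℝ)
    (hR : ∀ t s lam, R t s lam = ∑' n : ℕ, lam ^ (n + 1) * Kn (n + 1) t s) :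
    ∀ lam : ℝ, ∀ t s, t₀ ≤ s → s ≤ t → t ≤ T →
      R t s lam = lam * K t s + lam * ∫ z in s..t, K t z * R z s lam := by
  intro lam t s hs hst htT
  obtain ⟨k, hk, hkK⟩ := exists_continuous_uncurry_eqOn (isClosed_triangle t₀ T) (K := K) hK
  have hKk : ∀ z, s ≤ z → z ≤ t → K t z = k t z := fun z hsz hzt =>
    (hkK (mem_triangle.2 ⟨hs.trans hsz, hzt, htT⟩)).symm
  have hRk : ∀ z, s ≤ z → z ≤ t → R z s lam = resolventSeries k lam z s := fun z hsz hzt => by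
    rw [hR, resolventSeries]
    refine tsum_congr fun n => congrArg _ ?_
    exact (iteratedKernel_eq hkK hKn1 hKnrec n (mem_triangle.2 ⟨hs, hsz, hzt.trans htT⟩)).symm
  rw [hRk t hst le_rfl, hKk s le_rfl hst, resolventSeries_eq hk lam hst]
  congr 2
  refine integral_congr fun z hz => ?_
  rw [uIcc_of_le hst] at hz
  rw [hKk z hz.1 hz.2, hRk z hz.1 hz.2]

/-- The resolvent identity: R(t,s,λ) = λ K(t,s) + λ ∫ₛᵗ K(t,z) R(z,s,λ) dz on Δ. -/
theorem resolvent_identity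
    (t₀ T : ℝ) (ht : t₀ < T)
    (K : ℝ → ℝ → ℝ)
    (hK : ContinuousOn (fun q : ℝ × ℝ => K q.1 q.2)
      {q : ℝ × ℝ | t₀ ≤ q.2 ∧ q.2 ≤ q.1 ∧ q.1 ≤ T})
    (Kn : ℕ → ℝ → ℝ → ℝ)
    (hKn1 : ∀ t s, Kn 1 t s = K t s)
    (hKnrec : ∀ n, 2 ≤ n → ∀ t s, Kn n t s = ∫ z in s..t, K t z * Kn (n - 1) z s)
    (R : ℝ → ℝ → ℝ → ℝ)
    (hR : ∀ t s lam, R t s lam = ∑' n : ℕ, lam ^ (n + 1) * Kn (n + 1) t s) :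
    ∀ lam : ℝ, ∀ t s, t₀ ≤ s → s ≤ t → t ≤ T →
      R t s lam = lam * K t s + lam * ∫ z in s..t, K t z * R z s lam :=
  resolvent_identity_general t₀ T K hK Kn hKn1 hKnrec R hR
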